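/- arXiv:1503.07093 — 3 statements merged into one kernel-verified Lean document; each statement's English description precedes it below -/
import Mathlib

section
/- Hilbert space weak regularity lemma: Let K₁, K₂, … be arbitrary nonempty subsets of a real Hilbert space H. For every ε > 0 and f ∈ H there is an m ≤ 1/ε² and there are f_i ∈ K_i and γ_i ∈ ℝ for 1 ≤ i ≤ m such that for every g ∈ K_{m+1}, |⟨g, f − Σ_{i=1}^m γ_i f_i⟩| ≤ ε·‖f‖·‖g‖. -/
/-!
Greedy approximation: starting from the residual `f`, as long as some `h ∈ K (m+1)` has
`|⟪h, r⟫| > ε‖f‖‖h‖`, subtract from the residual `r` its projection onto `h`. Each such step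
lowers `‖r‖²` by more than `ε²‖f‖²`, so there can be at most `1/ε²` of them.
-/

namespace NDT11

open Finset RealInnerProductSpace

section

variable {H : Type*} [NormedAddCommGroup H] [InnerProductSpace ℝ H]

theorem norm_sub_proj_line_sq (r h : H) (hh : h ≠ 0) :
    ‖r - (⟪h, r⟫ / ‖h‖ ^ 2) • h‖ ^ 2 = ‖r‖ ^ 2 - ⟪h, r⟫ ^ 2 / ‖h‖ ^ 2 := by
  have hh' : ‖h‖ ≠ 0 := norm_ne_zero_iff.mpr hh
  rw [norm_sub_sq_real, inner_smul_right, norm_smul, mul_pow, Real.norm_eq_abs, sq_abs,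
    real_inner_comm]
  field_simp
  ring

theorem norm_sub_proj_line_sq_le {δ : ℝ} {r h : H} (hδ : 0 ≤ δ) (hlt : δ * ‖h‖ < |⟪h, r⟫|) :
    ‖r - (⟪h, r⟫ / ‖h‖ ^ 2) • h‖ ^ 2 ≤ ‖r‖ ^ 2 - δ ^ 2 := by
  have hh : h ≠ 0 := by
    rintro rfl
    simp at hlt
  have hpos : 0 < ‖h‖ ^ 2 := by positivity
  have hsq : (δ * ‖h‖) ^ 2 ≤ ⟪h, r⟫ ^ 2 := by
    rw [← sq_abs ⟪h, r⟫]
    exact pow_le_pow_left₀ (by positivity) hlt.le 2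
  rw [norm_sub_proj_line_sq r h hh, sub_le_sub_iff_left, le_div_iff₀ hpos]
  linarith

theorem sum_Icc_succ_update {R M : Type*} [AddCommMonoid M] [SMul R M] (g : ℕ → M) (γ : ℕ → R)
    (m : ℕ) (c : R) (x : M) :
    ∑ i ∈ Icc 1 (m + 1), Function.update γ (m + 1) c i • Function.update g (m + 1) x i =
      ∑ i ∈ Icc 1 m, γ i • g i + c • x := by
  rw [sum_Icc_succ_top (by omega)]
  congr 1
  · refine sum_congr rfl fun i hi => ?_
    have hne : i ≠ m + 1 := by
      rw [mem_Icc] at hi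
      omega
    rw [Function.update_of_ne hne, Function.update_of_ne hne]
  · simp

theorem exists_residual_inner_le (K : ℕ → Set H) (f : H) {δ : ℝ} (hδ : 0 ≤ δ) {n : ℕ}
    (hn : ‖f‖ ^ 2 < n * δ ^ 2) :
    ∃ m < n, ∃ (g : ℕ → H) (γ : ℕ → ℝ), (∀ i, 1 ≤ i → i ≤ m → g i ∈ K i) ∧
      ∀ h ∈ K (m + 1), |⟪h, f - ∑ i ∈ Icc 1 m, γ i • g i⟫| ≤ δ * ‖h‖ := by
  by_contra! hstep
  have hdecay : ∀ m ≤ n, ∃ (g : ℕ → H) (γ : ℕ → ℝ), (∀ i, 1 ≤ i → i ≤ m → g i ∈ K i) ∧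
      ‖f - ∑ i ∈ Icc 1 m, γ i • g i‖ ^ 2 ≤ ‖f‖ ^ 2 - m * δ ^ 2 := by
    intro m
    induction m with
    | zero => exact fun _ => ⟨0, 0, by omega, by simp⟩
    | succ m ih =>
      intro hm
      obtain ⟨g, γ, hg, hnorm⟩ := ih (by omega)
      obtain ⟨h, hK, hlt⟩ := hstep m (by omega) g γ hg
      set r := f - ∑ i ∈ Icc 1 m, γ i • g i
      refine ⟨Function.update g (m + 1) h, Function.update γ (m + 1) (⟪h, r⟫ / ‖h‖ ^ 2), ?_, ?_⟩
      · intro i hi1 hi2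
        rcases eq_or_ne i (m + 1) with rfl | hne
        · simpa using hK
        · rw [Function.update_of_ne hne]
          exact hg i hi1 (by omega)
      · rw [sum_Icc_succ_update, ← sub_sub]
        push_cast
        linarith [norm_sub_proj_line_sq_le hδ hlt]
  obtain ⟨g, γ, -, hnorm⟩ := hdecay n le_rfl
  nlinarith [sq_nonneg ‖f - ∑ i ∈ Icc 1 n, γ i • g i‖]

end

theorem hilbert_weak_regularity_general {H : Type*} [NormedAddCommGroup H]
    [InnerProductSpace ℝ H]
    (K : ℕ → Set H) (ε : ℝ) (hε : 0 < ε) (f : H) :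
    ∃ m : ℕ, (m : ℝ) ≤ 1 / ε^2 ∧
      ∃ (g : ℕ → H) (γ : ℕ → ℝ), (∀ i, 1 ≤ i → i ≤ m → g i ∈ K i) ∧
        ∀ h ∈ K (m+1),
          |(inner ℝ h (f - ∑ i ∈ Finset.Icc 1 m, γ i • g i) : ℝ)| ≤ ε * ‖f‖ * ‖h‖ := by
  rcases eq_or_ne f 0 with rfl | hf
  · exact ⟨0, by rw [Nat.cast_zero]; positivity, 0, 0, by omega, by simp⟩
  have hbound : ‖f‖ ^ 2 < ((⌊1 / ε ^ 2⌋₊ + 1 : ℕ) : ℝ) * (ε * ‖f‖) ^ 2 := by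
    have hfloor : 1 / ε ^ 2 < ((⌊1 / ε ^ 2⌋₊ + 1 : ℕ) : ℝ) := by
      push_cast
      exact Nat.lt_floor_add_one _
    rw [div_lt_iff₀ (by positivity)] at hfloor
    have : 0 < ‖f‖ ^ 2 := by positivity
    nlinarith
  obtain ⟨m, hm, g, γ, hg, hres⟩ :=
    exists_residual_inner_le K f (mul_nonneg hε.le (norm_nonneg f)) hbound
  refine ⟨m, ?_, g, γ, hg, hres⟩
  exact (Nat.le_floor_iff (by positivity)).mp (Nat.lt_succ_iff.mp hm)

/-- **Hilbert space weak regularity lemma, Lovász–Szegedy.** Let `K₁, K₂, …`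
be nonempty subsets of a real Hilbert space `H`. For every `ε > 0` and `f ∈ H` there are
`m ≤ 1/ε²`, elements `fᵢ ∈ Kᵢ` and reals `γᵢ` (`1 ≤ i ≤ m`) such that for every
`g ∈ K_{m+1}`, `|⟨g, f − Σᵢ γᵢ fᵢ⟩| ≤ ε·‖f‖·‖g‖`. -/
theorem hilbert_weak_regularity {H : Type*} [NormedAddCommGroup H]
    [InnerProductSpace ℝ H] [CompleteSpace H]
    (K : ℕ → Set H) (hK : ∀ i, (K i).Nonempty) (ε : ℝ) (hε : 0 < ε) (f : H) :
    ∃ m : ℕ, (m : ℝ) ≤ 1 / ε^2 ∧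
      ∃ (g : ℕ → H) (γ : ℕ → ℝ), (∀ i, 1 ≤ i → i ≤ m → g i ∈ K i) ∧
        ∀ h ∈ K (m+1),
          |(inner ℝ h (f - ∑ i ∈ Finset.Icc 1 m, γ i • g i) : ℝ)| ≤ ε * ‖f‖ * ‖h‖ :=
  hilbert_weak_regularity_general K ε hε f

end NDT11
end

section
/- Ground state energy reformulation of the partition-restricted cut norm: Let W be an r-kernel taking finitely many values {y₁,…,y_k}, regarded as a k-colored r-graphon with W^α = 1_{W=y_α}. Let A range over the set 𝔸 of r-arrays of size t with entries in {−1,1}, and let J_A^α = y_α·(A ⊗ B₀) where B₀ is the 0/1 r-array of size 2^r indexed by subsets of [r] with B₀(S₁,…,S_r)=1 iff j ∈ S_j for every j. Then max_{A∈𝔸} E_{r-1}(W, J_A) = sup_{Q: t_Q ≤ t} ‖W‖_{□,r,Q}, where the supremum runs over symmetric partitions Q of [0,1]^{H([r-1])} into at most t classes. -/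
open MeasureTheory

namespace NDT

/-- `HIdx q n`: the nonempty subsets of `[q] = Fin q` of cardinality at most `n`. -/
def HIdx (q n : ℕ) : Type := {S : Finset (Fin q) // S.Nonempty ∧ S.card ≤ n}

instance (q n : ℕ) : Fintype (HIdx q n) := by unfold HIdx; infer_instance

/-- Index set `H([r], r-1)` for `r = n+1`. -/
abbrev Idx (n : ℕ) := HIdx (n+1) n

/-- Index set `H([r-1])` for `r = n+1` (all nonempty subsets of `Fin n`). -/
abbrev Jdx (n : ℕ) := HIdx n n

/-- The projection `p_{[r] \ {i}}` from `[0,1]^{H([r],r-1)}` to `[0,1]^{H([r-1])}`,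
identifying `[r] \ {i}` with `[r-1]` via the order isomorphism `Fin.succAbove i`. -/
def projFun (n : ℕ) (i : Fin (n+1)) (x : Idx n → ℝ) (T : Jdx n) : ℝ :=
  x ⟨T.1.map (Fin.succAboveEmb i), T.2.1.map, by
      rw [Finset.card_map]; exact T.2.2⟩

/-- Action of a permutation of `Fin q` on `HIdx q n`. -/
def permH (q n : ℕ) (π : Equiv.Perm (Fin q)) (S : HIdx q n) : HIdx q n :=
  ⟨S.1.image π, S.2.1.image π, by
    rw [Finset.card_image_of_injective _ π.injective]; exact S.2.2⟩

/-- An `r`-kernel (`r = n+1`) is symmetric if it is invariant under the coordinate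
permutations induced by permutations of `[r]`. -/
def SymKernel (n : ℕ) (W : (Idx n → ℝ) → ℝ) : Prop :=
  ∀ (π : Equiv.Perm (Fin (n+1))) (x : Idx n → ℝ),
    W (fun S => x (permH (n+1) n π S)) = W x

/-- A subset of `[0,1]^{H([q],n)}` satisfying the usual symmetries. -/
def SymSet (q n : ℕ) (A : Set (HIdx q n → ℝ)) : Prop :=
  ∀ (π : Equiv.Perm (Fin q)) (y : HIdx q n → ℝ),
    y ∈ A → (fun T => y (permH q n π T)) ∈ A

/-- The cube `[0,1]^{H([q],n)}`. -/
def box (q n : ℕ) : Set (HIdx q n → ℝ) := Set.univ.pi fun _ => Set.Icc 0 1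

/-- The cut norm `‖W‖_{□,r}` of an `r`-kernel, `r = n+1`. -/
noncomputable def cutNorm (n : ℕ) (W : (Idx n → ℝ) → ℝ) : ℝ :=
  sSup {v : ℝ | ∃ S : Fin (n+1) → Set (Jdx n → ℝ),
    (∀ i, MeasurableSet (S i) ∧ SymSet n n (S i)) ∧
    v = |∫ x in box (n+1) n ∩ ⋂ i, projFun n i ⁻¹' S i, W x|}

/-- A symmetric measurable partition of `[0,1]^{H([r-1])}` indexed by `ι`. -/
structure IsSymPartition (n : ℕ) {ι : Type} [Fintype ι] (P : ι → Set (Jdx n → ℝ)) : Prop where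
  meas : ∀ j, MeasurableSet (P j)
  symm : ∀ j, SymSet n n (P j)
  disj : ∀ j j', j ≠ j' → Disjoint (P j) (P j')
  cover : box n n ⊆ ⋃ j, P j

/-- The cut-`P`-norm `‖W‖_{□,r,P}` of an `r`-kernel, `r = n+1`. -/
noncomputable def cutPNorm (n : ℕ) {ι : Type} [Fintype ι] (P : ι → Set (Jdx n → ℝ))
    (W : (Idx n → ℝ) → ℝ) : ℝ :=
  sSup {v : ℝ | ∃ S : Fin (n+1) → Set (Jdx n → ℝ),
    (∀ i, MeasurableSet (S i) ∧ SymSet n n (S i)) ∧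
    v = ∑ j : Fin (n+1) → ι,
      |∫ x in box (n+1) n ∩ ⋂ i, projFun n i ⁻¹' (S i ∩ P (j i)), W x|}


open scoped Classical

/-- The graphon-level energy `E_{P,r-1}(W,J)` of a `k`-colored `r`-graphon (`r = n+1`) with
respect to arrays `J` indexed by a finite class set `ι` and a partition `P` indexed by `ι`. -/
noncomputable def genEnergy (n : ℕ) {ι : Type} [Fintype ι] (k : ℕ)
    (Wc : Fin k → (Idx n → ℝ) → ℝ) (J : Fin k → (Fin (n+1) → ι) → ℝ)
    (P : ι → Set (Jdx n → ℝ)) : ℝ :=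
  ∑ α, ∑ f : Fin (n+1) → ι, J α f *
    ∫ x in box (n+1) n ∩ ⋂ i, projFun n i ⁻¹' P (f i), Wc α x

/-- The graphon-level ground state energy: supremum of the energy over all symmetric
measurable partitions of `[0,1]^{H([r-1])}` indexed by `ι`. -/
noncomputable def gseG (n : ℕ) (ι : Type) [Fintype ι] (k : ℕ)
    (Wc : Fin k → (Idx n → ℝ) → ℝ) (J : Fin k → (Fin (n+1) → ι) → ℝ) : ℝ :=
  sSup {e : ℝ | ∃ P : ι → Set (Jdx n → ℝ), IsSymPartition n P ∧ e = genEnergy n k Wc J P}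

/-! Writing `W = ∑_α y_α 1_{W = y_α}`, the energy of `J_A` on a partition `P` indexed by pairs
`(m, E)` collapses to `∑_g A(g) ∫ W` over the regions cut out by `S_i ∩ Q_{g_i}`, where `Q_m`
merges the classes `(m, ·)` and `S_i` the classes `(·, E)` with `i ∈ E`: the factor `B₀` keeps
exactly the choices of classes `(g_i, E_i)` with `i ∈ E_i`. As `A = ±1`, this is at most
`‖W‖_{□,r,Q}`. Conversely, given `Q` and `S_1, …, S_r`, refining `Q` by the atoms of the
Boolean algebra generated by the `S_i` and taking `A(g)` to be the sign of the matching integral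
realizes the sum of absolute values exactly. -/

open Function

section Symmetry

variable {q m : ℕ}

lemma permH_permH_inv (π : Equiv.Perm (Fin q)) (T : HIdx q m) :
    permH q m π (permH q m π⁻¹ T) = T :=
  Subtype.ext <| by simp [permH, Finset.image_image]

lemma SymSet.univ : SymSet q m Set.univ := fun _ _ _ => trivial

lemma SymSet.compl {A : Set (HIdx q m → ℝ)} (hA : SymSet q m A) : SymSet q m Aᶜ := by
  intro π y hy hπy
  apply hy
  simpa only [permH_permH_inv] using hA π⁻¹ _ hπy

lemma SymSet.inter {A B : Set (HIdx q m → ℝ)} (hA : SymSet q m A) (hB : SymSet q m B) :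
    SymSet q m (A ∩ B) :=
  fun π y hy => ⟨hA π y hy.1, hB π y hy.2⟩

lemma SymSet.iInter {β : Sort*} {A : β → Set (HIdx q m → ℝ)} (hA : ∀ i, SymSet q m (A i)) :
    SymSet q m (⋂ i, A i) :=
  fun π y hy => Set.mem_iInter.2 fun i => hA i π y (Set.mem_iInter.1 hy i)

lemma SymSet.biUnion {β : Type*} {F : Finset β} {A : β → Set (HIdx q m → ℝ)}
    (hA : ∀ c ∈ F, SymSet q m (A c)) : SymSet q m (⋃ c ∈ F, A c) := by
  intro π y hy
  simp only [Set.mem_iUnion, exists_prop] at hy ⊢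
  obtain ⟨c, hc, hyc⟩ := hy
  exact ⟨c, hc, hA c hc π y hyc⟩

end Symmetry

section Region

variable {n : ℕ}

lemma measurable_projFun (i : Fin (n+1)) : Measurable (projFun n i) :=
  measurable_pi_lambda _ fun _ => measurable_pi_apply _

lemma volume_box (q m : ℕ) : volume (box q m) = 1 := by
  rw [box, volume_pi_pi]
  simp [Real.volume_Icc]

lemma integrableOn_box {q m : ℕ} {f : (HIdx q m → ℝ) → ℝ} (hf : Measurable f) {M : ℝ}
    (hM : ∀ x, |f x| ≤ M) : IntegrableOn f (box q m) :=
  Measure.integrableOn_of_bounded (by simp [volume_box]) hf.aestronglyMeasurable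
    (ae_of_all _ hM)

def region (n : ℕ) (R : Fin (n+1) → Set (Jdx n → ℝ)) : Set (Idx n → ℝ) :=
  box (n+1) n ∩ ⋂ i, projFun n i ⁻¹' R i

lemma region_subset_box (R : Fin (n+1) → Set (Jdx n → ℝ)) : region n R ⊆ box (n+1) n :=
  Set.inter_subset_left

lemma region_subset_preimage (R : Fin (n+1) → Set (Jdx n → ℝ)) (i : Fin (n+1)) :
    region n R ⊆ projFun n i ⁻¹' R i :=
  Set.inter_subset_right.trans (Set.iInter_subset _ i)

lemma measurableSet_region {R : Fin (n+1) → Set (Jdx n → ℝ)} (hR : ∀ i, MeasurableSet (R i)) :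
    MeasurableSet (region n R) :=
  (MeasurableSet.univ_pi fun _ => measurableSet_Icc).inter
    (MeasurableSet.iInter fun i => measurable_projFun i (hR i))

lemma region_eq_empty {R : Fin (n+1) → Set (Jdx n → ℝ)} {i : Fin (n+1)} (h : R i = ∅) :
    region n R = ∅ :=
  Set.subset_eq_empty (region_subset_preimage R i) (by rw [h, Set.preimage_empty])

lemma abs_setIntegral_region_le {W : (Idx n → ℝ) → ℝ} (hW : IntegrableOn W (box (n+1) n))
    (R : Fin (n+1) → Set (Jdx n → ℝ)) :
    |∫ x in region n R, W x| ≤ ∫ x in box (n+1) n, |W x| :=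
  abs_integral_le_integral_abs.trans <| setIntegral_mono_set hW.abs
    (ae_of_all _ fun _ => abs_nonneg _) (ae_of_all _ (region_subset_box R))

lemma region_biUnion {ι : Type*} (P : ι → Set (Jdx n → ℝ)) (F : Fin (n+1) → Finset ι) :
    region n (fun i => ⋃ c ∈ F i, P c)
      = ⋃ f ∈ Fintype.piFinset F, region n (fun i => P (f i)) := by
  ext x
  simp only [region, Set.mem_inter_iff, Set.mem_iInter, Set.mem_preimage, Set.mem_iUnion,
    Fintype.mem_piFinset, exists_prop]
  constructor
  · rintro ⟨hx, h⟩
    choose f hfF hf using h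
    exact ⟨f, hfF, hx, hf⟩
  · rintro ⟨f, hfF, hx, hf⟩
    exact ⟨hx, fun i => ⟨f i, hfF i, hf i⟩⟩

lemma setIntegral_region_biUnion {ι : Type*} {P : ι → Set (Jdx n → ℝ)}
    (hPm : ∀ c, MeasurableSet (P c)) (hPd : Pairwise (Disjoint on P))
    {W : (Idx n → ℝ) → ℝ} (hW : IntegrableOn W (box (n+1) n)) (F : Fin (n+1) → Finset ι) :
    ∫ x in region n (fun i => ⋃ c ∈ F i, P c), W x
      = ∑ f ∈ Fintype.piFinset F, ∫ x in region n (fun i => P (f i)), W x := by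
  rw [region_biUnion]
  refine integral_biUnion_finset _ (fun f _ => measurableSet_region fun i => hPm _) ?_
    (fun f _ => hW.mono_set (region_subset_box _))
  intro f _ f' _ hne
  obtain ⟨i, hi⟩ := Function.ne_iff.1 hne
  exact ((hPd hi).preimage (projFun n i)).mono (region_subset_preimage _ i)
    (region_subset_preimage _ i)

end Region

section CutNorm

variable {n : ℕ} {ι : Type} [Fintype ι]

noncomputable def cutSum (Q : ι → Set (Jdx n → ℝ)) (W : (Idx n → ℝ) → ℝ)
    (S : Fin (n+1) → Set (Jdx n → ℝ)) : ℝ :=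
  ∑ j : Fin (n+1) → ι, |∫ x in region n (fun i => S i ∩ Q (j i)), W x|

lemma cutSum_le {W : (Idx n → ℝ) → ℝ} (hW : IntegrableOn W (box (n+1) n))
    (Q : ι → Set (Jdx n → ℝ)) (S : Fin (n+1) → Set (Jdx n → ℝ)) :
    cutSum Q W S ≤ (Fintype.card ι : ℝ) ^ (n+1) * ∫ x in box (n+1) n, |W x| := by
  have h := Finset.sum_le_card_nsmul Finset.univ _ _
    fun (j : Fin (n+1) → ι) _ => abs_setIntegral_region_le hW (fun i => S i ∩ Q (j i))
  simpa [cutSum, Fintype.card_fun] using h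

lemma cutPNorm_nonneg (Q : ι → Set (Jdx n → ℝ)) (W : (Idx n → ℝ) → ℝ) : 0 ≤ cutPNorm n Q W :=
  Real.sSup_nonneg <| by
    rintro _ ⟨S, -, rfl⟩
    exact Finset.sum_nonneg fun _ _ => abs_nonneg _

lemma le_cutPNorm {W : (Idx n → ℝ) → ℝ} (hW : IntegrableOn W (box (n+1) n))
    (Q : ι → Set (Jdx n → ℝ)) {S : Fin (n+1) → Set (Jdx n → ℝ)}
    (hS : ∀ i, MeasurableSet (S i) ∧ SymSet n n (S i)) : cutSum Q W S ≤ cutPNorm n Q W :=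
  le_csSup ⟨_, by rintro _ ⟨S', -, rfl⟩; exact cutSum_le hW Q S'⟩ ⟨S, hS, rfl⟩

lemma cutPNorm_le {Q : ι → Set (Jdx n → ℝ)} {W : (Idx n → ℝ) → ℝ} {a : ℝ}
    (h : ∀ S, (∀ i, MeasurableSet (S i) ∧ SymSet n n (S i)) → cutSum Q W S ≤ a) :
    cutPNorm n Q W ≤ a :=
  csSup_le ⟨_, fun _ => Set.univ, fun _ => ⟨MeasurableSet.univ, SymSet.univ⟩, rfl⟩ <| by
    rintro _ ⟨S, hS, rfl⟩
    exact h S hS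

lemma cutPNorm_le_pow_mul {W : (Idx n → ℝ) → ℝ} (hW : IntegrableOn W (box (n+1) n))
    (Q : ι → Set (Jdx n → ℝ)) {t : ℕ} (hι : Fintype.card ι ≤ t) :
    cutPNorm n Q W ≤ (t : ℝ) ^ (n+1) * ∫ x in box (n+1) n, |W x| :=
  cutPNorm_le fun S _ => (cutSum_le hW Q S).trans (by gcongr)

end CutNorm

section Partition

variable {n : ℕ} {ι κ : Type} [Fintype ι] [Fintype κ]

lemma IsSymPartition.pairwise_disjoint {P : ι → Set (Jdx n → ℝ)} (hP : IsSymPartition n P) :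
    Pairwise (Disjoint on P) :=
  fun c c' h => hP.disj c c' h

lemma IsSymPartition.fiberUnion {P : ι → Set (Jdx n → ℝ)} (hP : IsSymPartition n P)
    (π : ι → κ) :
    IsSymPartition n (fun m => ⋃ c ∈ Finset.univ.filter (fun c => π c = m), P c) where
  meas _ := Finset.measurableSet_biUnion _ fun c _ => hP.meas c
  symm _ := SymSet.biUnion fun c _ => hP.symm c
  disj m m' hne := by
    refine Set.disjoint_left.2 fun x hx hx' => hne ?_
    simp only [Set.mem_iUnion, Finset.mem_filter, Finset.mem_univ, true_and, exists_prop]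
      at hx hx'
    obtain ⟨c, rfl, hxc⟩ := hx
    obtain ⟨c', rfl, hxc'⟩ := hx'
    by_contra h
    exact Set.disjoint_left.1 (hP.disj c c' fun hc => h (hc ▸ rfl)) hxc hxc'
  cover x hx := by
    obtain ⟨c, hc⟩ := Set.mem_iUnion.1 (hP.cover hx)
    exact Set.mem_iUnion.2 ⟨π c, Set.mem_biUnion (by simp) hc⟩

lemma IsSymPartition.extend {Q : ι → Set (Jdx n → ℝ)} (hQ : IsSymPartition n Q) {e : ι → κ}
    (he : Injective e) : IsSymPartition n (Function.extend e Q fun _ => ∅) := by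
  have extend_eq (b : κ) : (∃ a, e a = b ∧ Function.extend e Q (fun _ => ∅) b = Q a)
      ∨ Function.extend e Q (fun _ => ∅) b = ∅ := by
    by_cases h : ∃ a, e a = b
    · obtain ⟨a, rfl⟩ := h
      exact .inl ⟨a, rfl, he.extend_apply _ _ a⟩
    · exact .inr (extend_apply' _ _ b h)
  refine ⟨fun b => ?_, fun b => ?_, fun b b' hne => ?_, fun x hx => ?_⟩
  · rcases extend_eq b with ⟨a, -, h⟩ | h <;> rw [h]
    exacts [hQ.meas a, MeasurableSet.empty]
  · rcases extend_eq b with ⟨a, -, h⟩ | h <;> rw [h]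
    exacts [hQ.symm a, fun _ _ h => h]
  · rcases extend_eq b with ⟨a, rfl, h⟩ | h
    · rcases extend_eq b' with ⟨a', rfl, h'⟩ | h'
      · rw [h, h']
        exact hQ.disj a a' fun ha => hne (ha ▸ rfl)
      · rw [h']
        exact Set.disjoint_empty _
    · rw [h]
      exact Set.empty_disjoint _
  · obtain ⟨a, ha⟩ := Set.mem_iUnion.1 (hQ.cover hx)
    exact Set.mem_iUnion.2 ⟨e a, by rwa [he.extend_apply]⟩

lemma cutSum_extend (Q : ι → Set (Jdx n → ℝ)) {e : ι → κ} (he : Injective e)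
    (W : (Idx n → ℝ) → ℝ) (S : Fin (n+1) → Set (Jdx n → ℝ)) :
    cutSum (Function.extend e Q fun _ => ∅) W S = cutSum Q W S := by
  refine (Fintype.sum_of_injective (e ∘ ·) (fun _ _ h => funext fun i => he (congrFun h i))
    _ _ (fun j hj => ?_) (fun j => ?_)).symm
  · obtain ⟨i, hi⟩ : ∃ i, ¬∃ a, e a = j i := by
      by_contra! h
      choose a ha using h
      exact hj ⟨a, funext ha⟩
    rw [region_eq_empty (i := i) (by rw [extend_apply' _ _ _ hi, Set.inter_empty]),
      Measure.restrict_empty, integral_zero_measure, abs_zero]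
  · simp only [comp_apply, he.extend_apply]

def atom {β X : Type*} [DecidableEq β] (S : β → Set X) (E : Finset β) : Set X :=
  ⋂ i, if i ∈ E then S i else (S i)ᶜ

lemma mem_atom_iff {β X : Type*} [Fintype β] [DecidableEq β] {S : β → Set X} {E : Finset β}
    {x : X} :
    x ∈ atom S E ↔ E = Finset.univ.filter (fun i => x ∈ S i) := by
  simp only [atom, Set.mem_iInter, Finset.ext_iff, Finset.mem_filter, Finset.mem_univ, true_and]
  refine forall_congr' fun i => ?_
  split_ifs with h <;> simp [h]

def refinement {β X : Type*} [DecidableEq β] (Q : ι → Set X) (S : β → Set X)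
    (c : ι × Finset β) : Set X :=
  Q c.1 ∩ atom S c.2

lemma IsSymPartition.refinement {Q : ι → Set (Jdx n → ℝ)} (hQ : IsSymPartition n Q)
    {S : Fin (n+1) → Set (Jdx n → ℝ)} (hS : ∀ i, MeasurableSet (S i) ∧ SymSet n n (S i)) :
    IsSymPartition n (NDT.refinement Q S) where
  meas c := (hQ.meas c.1).inter <| MeasurableSet.iInter fun i => by
    split_ifs
    exacts [(hS i).1, (hS i).1.compl]
  symm c := (hQ.symm c.1).inter <| SymSet.iInter fun i => by
    split_ifs
    exacts [(hS i).2, (hS i).2.compl]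
  disj c c' hne := by
    refine Set.disjoint_left.2 fun x ⟨hxQ, hxS⟩ ⟨hxQ', hxS'⟩ => hne (Prod.ext ?_ ?_)
    · by_contra h
      exact Set.disjoint_left.1 (hQ.disj _ _ h) hxQ hxQ'
    · exact (mem_atom_iff.1 hxS).trans (mem_atom_iff.1 hxS').symm
  cover x hx := by
    obtain ⟨m, hm⟩ := Set.mem_iUnion.1 (hQ.cover hx)
    exact Set.mem_iUnion.2 ⟨(m, Finset.univ.filter fun i => x ∈ S i), hm, mem_atom_iff.2 rfl⟩

def cell {β X : Type*} [Fintype β] [DecidableEq β] (P : ι × Finset β → Set X) (m : ι) (i : β) :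
    Set X :=
  ⋃ c ∈ Finset.univ.filter (fun c : ι × Finset β => c.1 = m ∧ i ∈ c.2), P c

lemma cell_eq_inter {β X : Type*} [Fintype β] [DecidableEq β] {P : ι × Finset β → Set X}
    (hPd : Pairwise (Disjoint on P)) (m : ι) (i : β) :
    cell P m i = (⋃ c ∈ Finset.univ.filter (fun c : ι × Finset β => i ∈ c.2), P c)
      ∩ ⋃ c ∈ Finset.univ.filter (fun c : ι × Finset β => c.1 = m), P c := by
  ext x
  simp only [cell, Set.mem_inter_iff, Set.mem_iUnion, Finset.mem_filter, Finset.mem_univ,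
    true_and, exists_prop]
  constructor
  · rintro ⟨c, ⟨hm, hi⟩, hx⟩
    exact ⟨⟨c, hi, hx⟩, ⟨c, hm, hx⟩⟩
  · rintro ⟨⟨c, hi, hx⟩, ⟨c', hm, hx'⟩⟩
    obtain rfl : c = c' := by
      by_contra h
      exact Set.disjoint_left.1 (hPd h) hx hx'
    exact ⟨c, ⟨hm, hi⟩, hx⟩

lemma cell_refinement {β X : Type*} [Fintype β] [DecidableEq β] (Q : ι → Set X) (S : β → Set X)
    (m : ι) (i : β) :
    cell (refinement Q S) m i = S i ∩ Q m := by
  ext x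
  simp only [cell, refinement, Set.mem_iUnion, Finset.mem_filter, Finset.mem_univ, true_and,
    exists_prop, Set.mem_inter_iff, mem_atom_iff]
  constructor
  · rintro ⟨c, ⟨rfl, hi⟩, hQ, hE⟩
    rw [hE] at hi
    exact ⟨(Finset.mem_filter.1 hi).2, hQ⟩
  · rintro ⟨hS, hQ⟩
    exact ⟨(m, _), ⟨rfl, by simpa using hS⟩, hQ, rfl⟩

end Partition

section Energy

variable {n k : ℕ} {ι : Type} [Fintype ι] {W : (Idx n → ℝ) → ℝ} {y : Fin k → ℝ}

lemma sum_mul_ite_eq (hy : Injective y) (hval : ∀ x, ∃ α, W x = y α) (x : Idx n → ℝ) :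
    ∑ α, y α * (if W x = y α then 1 else 0) = W x := by
  obtain ⟨α₀, hα₀⟩ := hval x
  simp [hα₀, hy.eq_iff]

lemma genEnergy_indicator (hWm : Measurable W) (hy : Injective y) (hval : ∀ x, ∃ α, W x = y α)
    (P : ι → Set (Jdx n → ℝ)) (c : (Fin (n+1) → ι) → ℝ) :
    genEnergy n k (fun α x => if W x = y α then 1 else 0) (fun α f => y α * c f) P
      = ∑ f, c f * ∫ x in region n (fun i => P (f i)), W x := by
  rw [genEnergy, Finset.sum_comm]
  refine Finset.sum_congr rfl fun f _ => ?_
  have hint (α : Fin k) : IntegrableOn (fun x => if W x = y α then (1 : ℝ) else 0)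
      (region n fun i => P (f i)) :=
    (integrableOn_box (Measurable.ite (hWm (measurableSet_singleton _)) measurable_const
      measurable_const) (M := 1) fun x => by split_ifs <;> simp).mono_set (region_subset_box _)
  calc ∑ α, y α * c f * ∫ x in region n (fun i => P (f i)), (if W x = y α then 1 else 0)
      = c f * ∑ α, ∫ x in region n (fun i => P (f i)), y α * (if W x = y α then 1 else 0) := by
        simp only [Finset.mul_sum, integral_const_mul]
        exact Finset.sum_congr rfl fun α _ => by ring
    _ = c f * ∫ x in region n (fun i => P (f i)), W x := by
        rw [← integral_finsetSum _ fun α _ => (hint α).const_mul (y α)]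
        simp only [sum_mul_ite_eq hy hval]

lemma sum_tensor_eq_sum_piFinset {r : ℕ} (A : (Fin r → ι) → ℝ)
    (I : (Fin r → ι × Finset (Fin r)) → ℝ) :
    ∑ f, A (fun j => (f j).1) * (if ∀ j, j ∈ (f j).2 then 1 else 0) * I f
      = ∑ g, A g * ∑ f ∈ Fintype.piFinset
          (fun i => Finset.univ.filter (fun c : ι × Finset (Fin r) => c.1 = g i ∧ i ∈ c.2)),
          I f := by
  have hpi (g : Fin r → ι) : Fintype.piFinset
      (fun i => Finset.univ.filter (fun c : ι × Finset (Fin r) => c.1 = g i ∧ i ∈ c.2))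
        = (Finset.univ.filter fun f : Fin r → ι × Finset (Fin r) => ∀ j, j ∈ (f j).2).filter
            (fun f => (fun j => (f j).1) = g) := by
    ext f
    simp [funext_iff, forall_and, and_comm]
  calc ∑ f, A (fun j => (f j).1) * (if ∀ j, j ∈ (f j).2 then 1 else 0) * I f
      = ∑ f ∈ Finset.univ.filter (fun f : Fin r → ι × Finset (Fin r) => ∀ j, j ∈ (f j).2),
          A (fun j => (f j).1) * I f := by
        rw [Finset.sum_filter]
        exact Finset.sum_congr rfl fun f _ => by split_ifs <;> simp
    _ = ∑ g, ∑ f ∈ (Finset.univ.filter fun f : Fin r → ι × Finset (Fin r) => ∀ j, j ∈ (f j).2)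
          |>.filter (fun f => (fun j => (f j).1) = g), A (fun j => (f j).1) * I f :=
        (Finset.sum_fiberwise _ _ _).symm
    _ = _ := by
        simp only [hpi, Finset.mul_sum]
        exact Finset.sum_congr rfl fun g _ => Finset.sum_congr rfl fun f hf => by
          rw [(Finset.mem_filter.1 hf).2]

lemma genEnergy_tensor (hWm : Measurable W) (hy : Injective y) (hval : ∀ x, ∃ α, W x = y α)
    (hW : IntegrableOn W (box (n+1) n)) (A : (Fin (n+1) → ι) → ℝ)
    {P : ι × Finset (Fin (n+1)) → Set (Jdx n → ℝ)} (hPm : ∀ c, MeasurableSet (P c))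
    (hPd : Pairwise (Disjoint on P)) :
    genEnergy n k (fun α x => if W x = y α then 1 else 0)
        (fun α p => y α * A (fun j => (p j).1) * (if ∀ j, j ∈ (p j).2 then 1 else 0)) P
      = ∑ g, A g * ∫ x in region n (fun i => cell P (g i) i), W x := by
  simp only [mul_assoc]
  rw [genEnergy_indicator hWm hy hval, sum_tensor_eq_sum_piFinset]
  simp only [cell, setIntegral_region_biUnion hPm hPd hW]

lemma genEnergy_le_cutPNorm (hWm : Measurable W) (hy : Injective y) (hval : ∀ x, ∃ α, W x = y α)
    (hW : IntegrableOn W (box (n+1) n)) {A : (Fin (n+1) → ι) → ℝ}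
    (hA : ∀ v, A v = 1 ∨ A v = -1) {P : ι × Finset (Fin (n+1)) → Set (Jdx n → ℝ)}
    (hP : IsSymPartition n P) :
    genEnergy n k (fun α x => if W x = y α then 1 else 0)
        (fun α p => y α * A (fun j => (p j).1) * (if ∀ j, j ∈ (p j).2 then 1 else 0)) P
      ≤ cutPNorm n (fun m => ⋃ c ∈ Finset.univ.filter (fun c => c.1 = m), P c) W := by
  rw [genEnergy_tensor hWm hy hval hW A hP.meas hP.pairwise_disjoint]
  refine le_trans ?_ (le_cutPNorm hW _ (S := fun i =>
    ⋃ c ∈ Finset.univ.filter (fun c : ι × Finset (Fin (n+1)) => i ∈ c.2), P c)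
    fun i => ⟨Finset.measurableSet_biUnion _ fun c _ => hP.meas c,
      SymSet.biUnion fun c _ => hP.symm c⟩)
  refine Finset.sum_le_sum fun g _ => ?_
  simp only [cell_eq_inter hP.pairwise_disjoint]
  rcases hA g with h | h <;> rw [h]
  exacts [(one_mul _).trans_le (le_abs_self _), (neg_one_mul _).trans_le (neg_le_abs _)]

lemma exists_genEnergy_eq_cutSum (hWm : Measurable W) (hy : Injective y)
    (hval : ∀ x, ∃ α, W x = y α) (hW : IntegrableOn W (box (n+1) n)) {s t : ℕ} (hst : s ≤ t)
    {Q : Fin s → Set (Jdx n → ℝ)} (hQ : IsSymPartition n Q) {S : Fin (n+1) → Set (Jdx n → ℝ)}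
    (hS : ∀ i, MeasurableSet (S i) ∧ SymSet n n (S i)) :
    ∃ A : (Fin (n+1) → Fin t) → ℝ, (∀ v, A v = 1 ∨ A v = -1) ∧
      ∃ P : Fin t × Finset (Fin (n+1)) → Set (Jdx n → ℝ), IsSymPartition n P ∧
        genEnergy n k (fun α x => if W x = y α then 1 else 0)
          (fun α p => y α * A (fun j => (p j).1) * (if ∀ j, j ∈ (p j).2 then 1 else 0)) P
          = cutSum Q W S := by
  set Q' := Function.extend (Fin.castLE hst) Q fun _ => ∅
  have hQ' : IsSymPartition n (refinement Q' S) :=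
    (hQ.extend (Fin.castLE_injective hst)).refinement hS
  set a : (Fin (n+1) → Fin t) → ℝ := fun g => ∫ x in region n (fun i => S i ∩ Q' (g i)), W x
  refine ⟨fun g => if 0 ≤ a g then 1 else -1, fun g => by dsimp only; split_ifs <;> simp,
    _, hQ', ?_⟩
  rw [genEnergy_tensor hWm hy hval hW (fun g => if 0 ≤ a g then 1 else -1) hQ'.meas
    hQ'.pairwise_disjoint, ← cutSum_extend Q (Fin.castLE_injective hst)]
  refine Finset.sum_congr rfl fun g _ => ?_
  simp only [cell_refinement]
  split_ifs with h
  · rw [one_mul, abs_of_nonneg h]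
  · rw [neg_one_mul, abs_of_neg (not_le.1 h)]

lemma genEnergy_le_pow_mul (hWm : Measurable W) (hy : Injective y)
    (hval : ∀ x, ∃ α, W x = y α) (hW : IntegrableOn W (box (n+1) n)) {t : ℕ}
    {A : (Fin (n+1) → Fin t) → ℝ} (hA : ∀ v, A v = 1 ∨ A v = -1)
    {P : Fin t × Finset (Fin (n+1)) → Set (Jdx n → ℝ)} (hP : IsSymPartition n P) :
    genEnergy n k (fun α x => if W x = y α then 1 else 0)
        (fun α p => y α * A (fun j => (p j).1) * (if ∀ j, j ∈ (p j).2 then 1 else 0)) P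
      ≤ (t : ℝ) ^ (n+1) * ∫ x in box (n+1) n, |W x| :=
  (genEnergy_le_cutPNorm hWm hy hval hW hA hP).trans
    (cutPNorm_le_pow_mul hW _ (Fintype.card_fin t).le)

lemma gseG_le_pow_mul (hWm : Measurable W) (hy : Injective y)
    (hval : ∀ x, ∃ α, W x = y α) (hW : IntegrableOn W (box (n+1) n)) {t : ℕ}
    {A : (Fin (n+1) → Fin t) → ℝ} (hA : ∀ v, A v = 1 ∨ A v = -1) :
    gseG n (Fin t × Finset (Fin (n+1))) k (fun α x => if W x = y α then 1 else 0)
        (fun α p => y α * A (fun j => (p j).1) * (if ∀ j, j ∈ (p j).2 then 1 else 0))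
      ≤ (t : ℝ) ^ (n+1) * ∫ x in box (n+1) n, |W x| := by
  refine Real.sSup_le ?_ ?_
  · rintro _ ⟨P, hP, rfl⟩
    exact genEnergy_le_pow_mul hWm hy hval hW hA hP
  · have : 0 ≤ ∫ x in box (n+1) n, |W x| := integral_nonneg fun x => abs_nonneg _
    positivity

lemma genEnergy_le_gseG (hWm : Measurable W) (hy : Injective y)
    (hval : ∀ x, ∃ α, W x = y α) (hW : IntegrableOn W (box (n+1) n)) {t : ℕ}
    {A : (Fin (n+1) → Fin t) → ℝ} (hA : ∀ v, A v = 1 ∨ A v = -1)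
    {P : Fin t × Finset (Fin (n+1)) → Set (Jdx n → ℝ)} (hP : IsSymPartition n P) :
    genEnergy n k (fun α x => if W x = y α then 1 else 0)
        (fun α p => y α * A (fun j => (p j).1) * (if ∀ j, j ∈ (p j).2 then 1 else 0)) P
      ≤ gseG n (Fin t × Finset (Fin (n+1))) k (fun α x => if W x = y α then 1 else 0)
        (fun α p => y α * A (fun j => (p j).1) * (if ∀ j, j ∈ (p j).2 then 1 else 0)) := by
  refine le_csSup ⟨(t : ℝ) ^ (n+1) * ∫ x in box (n+1) n, |W x|, ?_⟩ ⟨P, hP, rfl⟩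
  rintro _ ⟨P', hP', rfl⟩
  exact genEnergy_le_pow_mul hWm hy hval hW hA hP'

end Energy

lemma isSymPartition_univ {n : ℕ} : IsSymPartition n (fun _ : Fin 1 => Set.univ) where
  meas _ := MeasurableSet.univ
  symm _ := SymSet.univ
  disj i j h := absurd (Subsingleton.elim i j) h
  cover _ _ := Set.mem_iUnion.2 ⟨0, trivial⟩

theorem gse_eq_sup_cutPNorm_general (n t k : ℕ) (ht : 0 < t)
    (W : (Idx n → ℝ) → ℝ) (hWm : Measurable W)
    (y : Fin k → ℝ) (hy : Function.Injective y) (hval : ∀ x, ∃ α, W x = y α) :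
    sSup {e : ℝ | ∃ A : (Fin (n+1) → Fin t) → ℝ, (∀ v, A v = 1 ∨ A v = -1) ∧
        e = gseG n (Fin t × Finset (Fin (n+1))) k
              (fun α x => if W x = y α then (1 : ℝ) else 0)
              (fun α p => y α * A (fun j => (p j).1) *
                (if ∀ j, j ∈ (p j).2 then (1 : ℝ) else 0))}
      = sSup {v : ℝ | ∃ s : ℕ, s ≤ t ∧ ∃ Q : Fin s → Set (Jdx n → ℝ),
          IsSymPartition n Q ∧ v = cutPNorm n Q W} := by
  have hW : IntegrableOn W (box (n+1) n) := integrableOn_box hWm (M := ∑ α, |y α|) fun x => by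
    obtain ⟨α, hα⟩ := hval x
    exact hα ▸ Finset.single_le_sum (fun α _ => abs_nonneg (y α)) (Finset.mem_univ α)
  refine le_antisymm (Real.sSup_le ?_ (Real.sSup_nonneg ?_))
    (csSup_le ⟨_, 1, ht, _, isSymPartition_univ, rfl⟩ ?_)
  · rintro _ ⟨A, hA, rfl⟩
    refine Real.sSup_le ?_ (Real.sSup_nonneg ?_)
    · rintro _ ⟨P, hP, rfl⟩
      refine le_csSup_of_le ⟨t ^ (n+1) * ∫ x in box (n+1) n, |W x|, ?_⟩
        ⟨t, le_rfl, _, hP.fiberUnion Prod.fst, rfl⟩ (genEnergy_le_cutPNorm hWm hy hval hW hA hP)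
      rintro _ ⟨s, hst, Q, -, rfl⟩
      exact cutPNorm_le_pow_mul hW Q (by simpa using hst)
    · rintro _ ⟨s, -, Q, -, rfl⟩
      exact cutPNorm_nonneg Q W
  · rintro _ ⟨s, -, Q, -, rfl⟩
    exact cutPNorm_nonneg Q W
  · rintro _ ⟨s, hst, Q, hQ, rfl⟩
    refine cutPNorm_le fun S hS => ?_
    obtain ⟨A, hA, P, hP, hAP⟩ := exists_genEnergy_eq_cutSum (k := k) hWm hy hval hW hst hQ hS
    refine hAP ▸ le_csSup_of_le ⟨t ^ (n+1) * ∫ x in box (n+1) n, |W x|, ?_⟩ ⟨A, hA, rfl⟩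
      (genEnergy_le_gseG hWm hy hval hW hA hP)
    rintro _ ⟨A', hA', rfl⟩
    exact gseG_le_pow_mul hWm hy hval hW hA'

/-- **ground state energy reformulation of the partition-restricted cut
norm.** Let `W` be a symmetric `r`-kernel (`r = n+1`) taking the finitely many distinct
values `y₁,…,y_k`, regarded as the `k`-colored graphon `(1_{W=y_α})_α`. For `A` ranging over
`±1`-valued `r`-arrays of size `t` and `J_A^α = y_α·(A ⊗ B₀)` (with `B₀` the 0/1 array
indexed by subsets of `[r]` with `B₀(S₁,…,S_r)=1` iff `j ∈ S_j` for all `j`), the maximum of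
`E_{r-1}(W,J_A)` equals the supremum of `‖W‖_{□,r,Q}` over symmetric partitions `Q` into at
most `t` classes. -/
theorem gse_eq_sup_cutPNorm (n t k : ℕ) (ht : 0 < t) (hk : 0 < k)
    (W : (Idx n → ℝ) → ℝ) (hWm : Measurable W) (hWs : SymKernel n W)
    (y : Fin k → ℝ) (hy : Function.Injective y) (hval : ∀ x, ∃ α, W x = y α) :
    sSup {e : ℝ | ∃ A : (Fin (n+1) → Fin t) → ℝ, (∀ v, A v = 1 ∨ A v = -1) ∧
        e = gseG n (Fin t × Finset (Fin (n+1))) k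
              (fun α x => if W x = y α then (1 : ℝ) else 0)
              (fun α p => y α * A (fun j => (p j).1) *
                (if ∀ j, j ∈ (p j).2 then (1 : ℝ) else 0))}
      = sSup {v : ℝ | ∃ s : ℕ, s ≤ t ∧ ∃ Q : Fin s → Set (Jdx n → ℝ),
          IsSymPartition n Q ∧ v = cutPNorm n Q W} :=
  gse_eq_sup_cutPNorm_general n t k ht W hWm y hy hval

end NDT
end

section
/- Subgraph-density concentration for random induced subgraphs: Let F be a k-colored r-graph on m vertices and H a k-colored r-graph on at least n vertices. Then for any δ > 0, P(|t(F, G(n,H)) − t(F,H)| ≥ δ) ≤ 2·exp(−δ²n/(2m²)). -/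
open scoped Classical

namespace NDT16

/-- An `r`-edge of `Fin q`: a subset of cardinality `r`. -/
def Edge (q r : ℕ) : Type := {e : Finset (Fin q) // e.card = r}

instance (q r : ℕ) : Fintype (Edge q r) := by unfold Edge; infer_instance

/-- The image of an `r`-edge under an injection of vertex sets. -/
def mapEdge {q m r : ℕ} (φ : Fin q ↪ Fin m) (e : Edge q r) : Edge m r :=
  ⟨e.1.map φ, by rw [Finset.card_map]; exact e.2⟩

/-- The induced density `t(F,G)`: the probability that the colored `r`-graph induced by a
uniform random injection of `[q]` into the vertex set of `G` equals `F`. -/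
noncomputable def tG {q m r k : ℕ} (F : Edge q r → Fin k) (G : Edge m r → Fin k) : ℝ :=
  (∑ φ : Fin q ↪ Fin m, if (∀ e : Edge q r, G (mapEdge φ e) = F e) then (1 : ℝ) else 0)
    / (Fintype.card (Fin q ↪ Fin m) : ℝ)

/-!
Expose the sample one vertex at a time. Let `Z i` be the average of `t(F, G(s,H))` over the
samples that agree with the given one on their first `i` vertices; then `Z 0 = t(F,H)`, because
every embedding of `[m]` into `H` is hit equally often, and `Z s = t(F, G(s,H))`. Revealing one
more vertex moves `Z` by at most `m/s`: the two classes to compare are matched by a transposition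
of the vertices of `H`, which either only relabels the sample or replaces a single sample vertex,
and only an `m/s` fraction of the embeddings of `[m]` into the sample see a given vertex.
Hoeffding's lemma on each class and the exponential Markov inequality give the Azuma–Hoeffding
tail `2 exp(-δ² / (2 s (m/s)²))`.
-/

open Finset Real

lemma exp_mul_le_cosh_add_mul_sinh {c x : ℝ} (hc : 0 < c) (hx : |x| ≤ c) (L : ℝ) :
    exp (L * x) ≤ cosh (L * c) + x / c * sinh (L * c) := by
  obtain ⟨hlo, hhi⟩ := abs_le.mp hx
  have hconv := convexOn_exp.2 (Set.mem_univ (L * c)) (Set.mem_univ (-(L * c)))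
    (div_nonneg (by linarith : 0 ≤ c + x) (by positivity : (0 : ℝ) ≤ 2 * c))
    (div_nonneg (by linarith : 0 ≤ c - x) (by positivity : (0 : ℝ) ≤ 2 * c))
    (by field_simp; ring)
  simp only [smul_eq_mul] at hconv
  calc exp (L * x) = exp ((c + x) / (2 * c) * (L * c) + (c - x) / (2 * c) * -(L * c)) := by
        congr 1; field_simp; ring
    _ ≤ _ := hconv
    _ = cosh (L * c) + x / c * sinh (L * c) := by rw [cosh_eq, sinh_eq]; field_simp; ring

lemma sum_exp_mul_le_of_sum_eq_zero {ι : Type*} (S : Finset ι) (x : ι → ℝ) {c : ℝ} (hc : 0 ≤ c)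
    (hsum : ∑ i ∈ S, x i = 0) (hx : ∀ i ∈ S, |x i| ≤ c) (L : ℝ) :
    ∑ i ∈ S, exp (L * x i) ≤ #S * exp (L ^ 2 * c ^ 2 / 2) := by
  obtain rfl | hc := hc.eq_or_lt
  · have hx0 : ∀ i ∈ S, exp (L * x i) = 1 := fun i hi => by
      rw [abs_nonpos_iff.mp (hx i hi), mul_zero, exp_zero]
    simp [sum_congr rfl hx0]
  calc ∑ i ∈ S, exp (L * x i)
      ≤ ∑ i ∈ S, (cosh (L * c) + x i / c * sinh (L * c)) :=
        sum_le_sum fun i hi => exp_mul_le_cosh_add_mul_sinh hc (hx i hi) L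
    _ = #S * cosh (L * c) := by
        rw [sum_add_distrib, ← sum_mul, ← sum_div, hsum]; simp
    _ ≤ #S * exp (L ^ 2 * c ^ 2 / 2) := by
        rw [← mul_pow]; gcongr; exact cosh_le_exp_half_sq _

section CondAvg

variable {Ω K : Type*} [Fintype Ω]

noncomputable def fiber (κ : Ω → K) (a : Ω) : Finset Ω := {b | κ b = κ a}

noncomputable def condAvg (κ : Ω → K) (f : Ω → ℝ) (a : Ω) : ℝ :=
  (∑ b ∈ fiber κ a, f b) / #(fiber κ a)

variable {κ κ' : Ω → K}

@[simp] lemma mem_fiber {a b : Ω} : b ∈ fiber κ a ↔ κ b = κ a := by simp [fiber]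

lemma fiber_congr {a b : Ω} (h : κ a = κ b) : fiber κ a = fiber κ b := by simp only [fiber, h]

lemma card_fiber_pos (κ : Ω → K) (a : Ω) : 0 < #(fiber κ a) :=
  card_pos.mpr ⟨a, mem_fiber.mpr rfl⟩

lemma condAvg_congr (f : Ω → ℝ) {a b : Ω} (h : κ a = κ b) : condAvg κ f a = condAvg κ f b := by
  simp only [condAvg, fiber_congr h]

lemma card_fiber_mul_condAvg (κ : Ω → K) (f : Ω → ℝ) (a : Ω) :
    #(fiber κ a) * condAvg κ f a = ∑ b ∈ fiber κ a, f b :=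
  mul_div_cancel₀ _ (Nat.cast_ne_zero.mpr (card_fiber_pos κ a).ne')

lemma condAvg_eq_self {f : Ω → ℝ} (hf : ∀ a b, κ a = κ b → f a = f b) (a : Ω) :
    condAvg κ f a = f a := by
  rw [condAvg, sum_congr rfl fun b hb => hf b a (mem_fiber.mp hb), sum_const, nsmul_eq_mul,
    mul_div_cancel_left₀ _ (Nat.cast_ne_zero.mpr (card_fiber_pos κ a).ne')]

lemma condAvg_of_forall_eq (hκ : ∀ a b, κ a = κ b) (f : Ω → ℝ) (a : Ω) :
    condAvg κ f a = (∑ b, f b) / Fintype.card Ω := by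
  rw [condAvg, show fiber κ a = univ from eq_univ_of_forall fun b => mem_fiber.mpr (hκ b a),
    card_univ]

lemma condAvg_neg (κ : Ω → K) (f : Ω → ℝ) (a : Ω) :
    condAvg κ (fun b => -f b) a = -condAvg κ f a := by
  simp only [condAvg, sum_neg_distrib, neg_div]

lemma sum_condAvg_of_saturated {C : Finset Ω} (hC : ∀ a ∈ C, ∀ b, κ b = κ a → b ∈ C)
    (f : Ω → ℝ) : ∑ a ∈ C, condAvg κ f a = ∑ a ∈ C, f a := by
  have hfiber : ∀ a ∈ C, fiber κ a = {b ∈ C | κ b = κ a} := fun a ha => by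
    ext b; simpa using fun h => hC a ha b h
  calc ∑ a ∈ C, condAvg κ f a
      = ∑ a ∈ C, ∑ b ∈ C, if κ b = κ a then f b / #(fiber κ b) else 0 := by
        refine sum_congr rfl fun a ha => ?_
        rw [← sum_filter, ← hfiber a ha, condAvg, sum_div]
        exact sum_congr rfl fun b hb => by rw [fiber_congr (mem_fiber.mp hb)]
    _ = ∑ b ∈ C, f b / #(fiber κ b) * #(fiber κ b) := by
        rw [sum_comm]
        refine sum_congr rfl fun b hb => ?_
        rw [← sum_filter, sum_const, nsmul_eq_mul, mul_comm, hfiber b hb]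
        simp_rw [eq_comm]
    _ = ∑ b ∈ C, f b :=
        sum_congr rfl fun b _ => div_mul_cancel₀ _ (Nat.cast_ne_zero.mpr (card_fiber_pos κ b).ne')

lemma sum_condAvg (κ : Ω → K) (f : Ω → ℝ) : ∑ a, condAvg κ f a = ∑ a, f a :=
  sum_condAvg_of_saturated (fun _ _ _ _ => mem_univ _) f

lemma condAvg_condAvg (hκ : ∀ a b, κ' a = κ' b → κ a = κ b) (f : Ω → ℝ) (a : Ω) :
    condAvg κ (condAvg κ' f) a = condAvg κ f a := by
  rw [condAvg, sum_condAvg_of_saturated, condAvg]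
  intro b hb c hc
  exact mem_fiber.mpr ((hκ c b hc).trans (mem_fiber.mp hb))

lemma abs_sub_condAvg_le {g : Ω → ℝ} {c : ℝ} {a : Ω}
    (hg : ∀ b ∈ fiber κ a, |g a - g b| ≤ c) : |g a - condAvg κ g a| ≤ c := by
  have hpos : (0 : ℝ) < #(fiber κ a) := Nat.cast_pos.mpr (card_fiber_pos κ a)
  have : g a - condAvg κ g a = (∑ b ∈ fiber κ a, (g a - g b)) / #(fiber κ a) := by
    rw [sum_sub_distrib, sum_const, nsmul_eq_mul, sub_div, condAvg,
      mul_div_cancel_left₀ _ hpos.ne']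
  rw [this, abs_div, abs_of_pos hpos, div_le_iff₀ hpos, mul_comm, ← nsmul_eq_mul]
  exact (abs_sum_le_sum_abs _ _).trans (sum_le_card_nsmul _ _ _ hg)

lemma abs_condAvg_sub_condAvg_le (hκ : ∀ a b, κ' a = κ' b → κ a = κ b) {f : Ω → ℝ} {c : ℝ}
    (hf : ∀ a b, κ a = κ b → |condAvg κ' f a - condAvg κ' f b| ≤ c) (a : Ω) :
    |condAvg κ' f a - condAvg κ f a| ≤ c := by
  rw [← condAvg_condAvg hκ]
  exact abs_sub_condAvg_le fun b hb => hf a b (mem_fiber.mp hb).symm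

lemma abs_condAvg_sub_condAvg_le_of_equiv {f : Ω → ℝ} {c : ℝ} {a b : Ω} (τ : Ω ≃ Ω)
    (hτ : ∀ w, κ w = κ a ↔ κ (τ w) = κ b) (hf : ∀ w, κ w = κ a → |f w - f (τ w)| ≤ c) :
    |condAvg κ f a - condAvg κ f b| ≤ c := by
  have hmem : ∀ w, w ∈ fiber κ a ↔ τ w ∈ fiber κ b := by simpa using hτ
  have hcard := card_equiv τ hmem
  have hpos : (0 : ℝ) < #(fiber κ a) := Nat.cast_pos.mpr (card_fiber_pos κ a)
  rw [condAvg, condAvg, ← hcard, ← sum_equiv τ hmem fun _ _ => rfl, div_sub_div_same,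
    ← sum_sub_distrib, abs_div, abs_of_pos hpos, div_le_iff₀ hpos, mul_comm, ← nsmul_eq_mul]
  exact (abs_sum_le_sum_abs _ _).trans
    (sum_le_card_nsmul _ _ _ fun w hw => hf w (mem_fiber.mp hw))

lemma sum_exp_condAvg_le {f : Ω → ℝ} {c : ℝ} (hκ : ∀ a b, κ' a = κ' b → κ a = κ b) (hc : 0 ≤ c)
    (hf : ∀ a, |condAvg κ' f a - condAvg κ f a| ≤ c) (L : ℝ) :
    ∑ a, exp (L * condAvg κ' f a) ≤ exp (L ^ 2 * c ^ 2 / 2) * ∑ a, exp (L * condAvg κ f a) := by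
  rw [← sum_condAvg κ, ← sum_condAvg κ fun a => exp (L * condAvg κ f a), mul_sum]
  refine sum_le_sum fun a _ => ?_
  have hconst : ∀ b ∈ fiber κ a, condAvg κ f b = condAvg κ f a :=
    fun b hb => condAvg_congr f (mem_fiber.mp hb)
  have hzero : ∑ b ∈ fiber κ a, (condAvg κ' f b - condAvg κ f a) = 0 := by
    rw [sum_sub_distrib, ← card_fiber_mul_condAvg, condAvg_condAvg hκ, sum_const, nsmul_eq_mul,
      sub_self]
  have hbound : ∀ b ∈ fiber κ a, |condAvg κ' f b - condAvg κ f a| ≤ c :=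
    fun b hb => hconst b hb ▸ hf b
  have hhoeffding := sum_exp_mul_le_of_sum_eq_zero _ _ hc hzero hbound L
  have hpos : (0 : ℝ) < #(fiber κ a) := Nat.cast_pos.mpr (card_fiber_pos κ a)
  have hright : condAvg κ (fun b => exp (L * condAvg κ f b)) a = exp (L * condAvg κ f a) :=
    condAvg_eq_self (fun b b' h => by rw [condAvg_congr f h]) a
  rw [hright, condAvg, div_le_iff₀ hpos]
  calc ∑ b ∈ fiber κ a, exp (L * condAvg κ' f b)
      = exp (L * condAvg κ f a) * ∑ b ∈ fiber κ a, exp (L * (condAvg κ' f b - condAvg κ f a)) := by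
        rw [mul_sum]; exact sum_congr rfl fun b _ => by rw [← exp_add]; ring_nf
    _ ≤ exp (L * condAvg κ f a) * (#(fiber κ a) * exp (L ^ 2 * c ^ 2 / 2)) := by gcongr
    _ = _ := by ring

end CondAvg

section Azuma

variable {Ω K : Type*} [Fintype Ω] {κ : ℕ → Ω → K} {f : Ω → ℝ} {c : ℝ}

lemma sum_exp_condAvg_le_exp_mul (hκ : ∀ i a b, κ (i + 1) a = κ (i + 1) b → κ i a = κ i b)
    (hc : 0 ≤ c) {n : ℕ}
    (hf : ∀ i < n, ∀ a, |condAvg (κ (i + 1)) f a - condAvg (κ i) f a| ≤ c) (L : ℝ) :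
    ∑ a, exp (L * condAvg (κ n) f a) ≤
      exp (n * (L ^ 2 * c ^ 2 / 2)) * ∑ a, exp (L * condAvg (κ 0) f a) := by
  induction n with
  | zero => simp
  | succ n ih =>
    calc ∑ a, exp (L * condAvg (κ (n + 1)) f a)
        ≤ exp (L ^ 2 * c ^ 2 / 2) * ∑ a, exp (L * condAvg (κ n) f a) :=
          sum_exp_condAvg_le (hκ n) hc (hf n n.lt_succ_self) L
      _ ≤ exp (L ^ 2 * c ^ 2 / 2) *
            (exp (n * (L ^ 2 * c ^ 2 / 2)) * ∑ a, exp (L * condAvg (κ 0) f a)) := by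
          gcongr; exact ih fun i hi => hf i (hi.trans n.lt_succ_self)
      _ = _ := by rw [← mul_assoc, ← exp_add]; push_cast; ring_nf

lemma sum_ite_le_sub_le_mul_exp (h0 : ∀ a b, κ 0 a = κ 0 b)
    (hκ : ∀ i a b, κ (i + 1) a = κ (i + 1) b → κ i a = κ i b) {n : ℕ}
    (hn : ∀ a b, κ n a = κ n b → f a = f b) {μ : ℝ} (hμ : ∑ a, f a = Fintype.card Ω * μ)
    (hc : 0 ≤ c) (hf : ∀ i < n, ∀ a, |condAvg (κ (i + 1)) f a - condAvg (κ i) f a| ≤ c)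
    {δ : ℝ} (hδ : 0 ≤ δ) :
    ∑ a, (if δ ≤ f a - μ then 1 else 0 : ℝ) ≤ Fintype.card Ω * exp (-δ ^ 2 / (2 * n * c ^ 2)) := by
  set L := δ / (n * c ^ 2)
  have hL : 0 ≤ L := by positivity
  have hmarkov : ∀ a, (if δ ≤ f a - μ then 1 else 0 : ℝ) ≤ exp (L * (f a - μ - δ)) := fun a => by
    split_ifs with h
    · exact one_le_exp (mul_nonneg hL (by linarith))
    · positivity
  have hstart : ∀ a, condAvg (κ 0) f a = μ := fun a => by
    have : (Fintype.card Ω : ℝ) ≠ 0 := Nat.cast_ne_zero.mpr (Fintype.card_pos_iff.mpr ⟨a⟩).ne'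
    rw [condAvg_of_forall_eq h0, hμ, mul_div_cancel_left₀ _ this]
  -- if `n * c ^ 2 = 0` then `L = 0` and both sides vanish, since `x / 0 = 0`
  have hexponent : -(L * (μ + δ)) + n * (L ^ 2 * c ^ 2 / 2) + L * μ = -δ ^ 2 / (2 * n * c ^ 2) := by
    rcases eq_or_ne ((n : ℝ) * c ^ 2) 0 with h | h
    · simp [L, h, mul_assoc]
    · simp only [L]; field_simp; ring
  calc ∑ a, (if δ ≤ f a - μ then 1 else 0 : ℝ)
      ≤ ∑ a, exp (L * (f a - μ - δ)) := sum_le_sum fun a _ => hmarkov a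
    _ = exp (-(L * (μ + δ))) * ∑ a, exp (L * condAvg (κ n) f a) := by
        rw [mul_sum]
        refine sum_congr rfl fun a _ => ?_
        rw [condAvg_eq_self hn, ← exp_add]; ring_nf
    _ ≤ exp (-(L * (μ + δ))) *
          (exp (n * (L ^ 2 * c ^ 2 / 2)) * ∑ a, exp (L * condAvg (κ 0) f a)) := by
        gcongr; exact sum_exp_condAvg_le_exp_mul hκ hc hf L
    _ = Fintype.card Ω * exp (-δ ^ 2 / (2 * n * c ^ 2)) := by
        simp only [hstart, sum_const, card_univ, nsmul_eq_mul]
        rw [← hexponent, exp_add, exp_add]; ring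

lemma sum_ite_le_abs_sub_le_mul_exp (h0 : ∀ a b, κ 0 a = κ 0 b)
    (hκ : ∀ i a b, κ (i + 1) a = κ (i + 1) b → κ i a = κ i b) {n : ℕ}
    (hn : ∀ a b, κ n a = κ n b → f a = f b) {μ : ℝ} (hμ : ∑ a, f a = Fintype.card Ω * μ)
    (hc : 0 ≤ c) (hf : ∀ i < n, ∀ a, |condAvg (κ (i + 1)) f a - condAvg (κ i) f a| ≤ c)
    {δ : ℝ} (hδ : 0 ≤ δ) :
    ∑ a, (if δ ≤ |f a - μ| then 1 else 0 : ℝ) ≤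
      Fintype.card Ω * (2 * exp (-δ ^ 2 / (2 * n * c ^ 2))) := by
  have hupper := sum_ite_le_sub_le_mul_exp h0 hκ hn hμ hc hf hδ
  have hlower := sum_ite_le_sub_le_mul_exp (f := fun a => -f a) (μ := -μ) h0 hκ
    (fun a b h => neg_inj.mpr (hn a b h)) (by rw [sum_neg_distrib, hμ, mul_neg])
    hc (fun i hi a => by simpa only [condAvg_neg, ← neg_sub', abs_neg] using hf i hi a) hδ
  have hsplit : ∀ a, (if δ ≤ |f a - μ| then 1 else 0 : ℝ) ≤
      (if δ ≤ f a - μ then 1 else 0) + (if δ ≤ -f a - -μ then 1 else 0) := fun a => by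
    rcases le_total 0 (f a - μ) with h | h
    · rw [abs_of_nonneg h]; split_ifs <;> linarith
    · rw [abs_of_nonpos h]; split_ifs <;> linarith
  calc ∑ a, (if δ ≤ |f a - μ| then 1 else 0 : ℝ)
      ≤ ∑ a, ((if δ ≤ f a - μ then 1 else 0) + (if δ ≤ -f a - -μ then 1 else 0)) :=
        sum_le_sum fun a _ => hsplit a
    _ ≤ _ := by rw [sum_add_distrib]; linarith

end Azuma

section Symmetry

lemma card_mul_sum_comp_of_equivariant {G X Y : Type*} [Group G] [MulAction G X] [MulAction G Y]
    [MulAction.IsPretransitive G Y] [Fintype X] [Fintype Y] {f : X → Y}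
    (hf : ∀ (g : G) x, f (g • x) = g • f x) (u : Y → ℝ) :
    Fintype.card Y * ∑ x, u (f x) = Fintype.card X * ∑ y, u y := by
  set n : Y → ℕ := fun y => #{x | f x = y}
  have hn : ∀ y y', n y = n y' := fun y y' => by
    obtain ⟨g, rfl⟩ := MulAction.exists_smul_eq G y y'
    exact card_equiv (MulAction.toPerm g) fun x => by simp [hf]
  have hsum : ∀ v : Y → ℝ, ∑ x, v (f x) = ∑ y, n y * v y := fun v => by
    rw [← sum_fiberwise univ f]
    refine sum_congr rfl fun y _ => ?_
    rw [sum_congr rfl fun x hx => by rw [(mem_filter.mp hx).2], sum_const, nsmul_eq_mul]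
  have hcard : (Fintype.card X : ℝ) = ∑ y, (n y : ℝ) := by
    simpa using hsum fun _ => 1
  calc Fintype.card Y * ∑ x, u (f x) = ∑ y', ∑ y, n y' * u y := by
        rw [hsum, ← card_univ, ← nsmul_eq_mul, ← sum_const]
        exact sum_congr rfl fun y' _ => sum_congr rfl fun y _ => by rw [hn y y']
    _ = Fintype.card X * ∑ y, u y := by simp_rw [← mul_sum, hcard, sum_mul]

instance {α β : Type*} [Finite α] : MulAction.IsPretransitive (Equiv.Perm β) (α ↪ β) :=
  ⟨Equiv.Perm.exists_smul_eq_embedding⟩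

variable {α β γ : Type*} [Fintype α] [Fintype β] [Fintype γ]

lemma card_mul_sum_trans (x : α ↪ β) (u : (α ↪ γ) → ℝ) :
    Fintype.card (α ↪ γ) * ∑ φ : β ↪ γ, u (x.trans φ) = Fintype.card (β ↪ γ) * ∑ χ, u χ :=
  card_mul_sum_comp_of_equivariant (G := Equiv.Perm γ) (fun _ _ => rfl) u

lemma card_mul_sum_ite_apply_eq [DecidableEq β] (p : α) (y : β) :
    Fintype.card β * ∑ ψ : α ↪ β, (if ψ p = y then 1 else 0 : ℝ) = Fintype.card (α ↪ β) := by
  rw [card_mul_sum_comp_of_equivariant (G := Equiv.Perm β) (f := fun ψ : α ↪ β => ψ p)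
    (fun _ _ => rfl) fun z => if z = y then 1 else 0]
  simp

end Symmetry

section Density

variable {r k m q s M : ℕ}

def comap (φ : Fin s ↪ Fin M) (H : Edge M r → Fin k) : Edge s r → Fin k :=
  fun e => H (mapEdge φ e)

noncomputable def copyIndicator (F : Edge m r → Fin k) (G : Edge q r → Fin k)
    (ψ : Fin m ↪ Fin q) : ℝ :=
  if ∀ e, G (mapEdge ψ e) = F e then 1 else 0

lemma tG_eq_sum_copyIndicator (F : Edge m r → Fin k) (G : Edge q r → Fin k) :
    tG F G = (∑ ψ, copyIndicator F G ψ) / Fintype.card (Fin m ↪ Fin q) := rfl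

lemma mapEdge_trans (ψ : Fin q ↪ Fin s) (φ : Fin s ↪ Fin M) (e : Edge q r) :
    mapEdge (ψ.trans φ) e = mapEdge φ (mapEdge ψ e) :=
  Subtype.ext (map_map _ _ _).symm

lemma comap_trans (ψ : Fin q ↪ Fin s) (φ : Fin s ↪ Fin M) (H : Edge M r → Fin k) :
    comap (ψ.trans φ) H = comap ψ (comap φ H) :=
  funext fun e => congrArg H (mapEdge_trans ψ φ e)

lemma copyIndicator_comap (F : Edge m r → Fin k) (H : Edge M r → Fin k) (φ : Fin s ↪ Fin M)
    (ψ : Fin m ↪ Fin s) : copyIndicator F (comap φ H) ψ = copyIndicator F H (ψ.trans φ) := by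
  unfold copyIndicator
  congr 1
  simp only [comap, mapEdge_trans]

lemma tG_comap_perm (F : Edge m r → Fin k) (G : Edge s r → Fin k) (σ : Equiv.Perm (Fin s)) :
    tG F (comap σ.toEmbedding G) = tG F G := by
  simp only [tG_eq_sum_copyIndicator, copyIndicator_comap]
  congr 1
  exact Fintype.sum_equiv (MulAction.toPerm σ) _ _ fun ψ => rfl

lemma sum_tG_comap (hms : m ≤ s) (F : Edge m r → Fin k) (H : Edge M r → Fin k) :
    ∑ φ : Fin s ↪ Fin M, tG F (comap φ H) = Fintype.card (Fin s ↪ Fin M) * tG F H := by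
  rcases isEmpty_or_nonempty (Fin s ↪ Fin M) with hempty | ⟨⟨φ₀⟩⟩
  · simp
  have hA : (Fintype.card (Fin m ↪ Fin M) : ℝ) ≠ 0 :=
    Nat.cast_ne_zero.mpr (Fintype.card_pos_iff.mpr ⟨(Fin.castLEEmb hms).trans φ₀⟩).ne'
  have hC : (Fintype.card (Fin m ↪ Fin s) : ℝ) ≠ 0 :=
    Nat.cast_ne_zero.mpr (Fintype.card_pos_iff.mpr ⟨Fin.castLEEmb hms⟩).ne'
  have hrestrict : ∀ ψ : Fin m ↪ Fin s,
      ∑ φ : Fin s ↪ Fin M, copyIndicator F H (ψ.trans φ) = Fintype.card (Fin s ↪ Fin M) * tG F H :=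
    fun ψ => by
      rw [tG_eq_sum_copyIndicator, mul_div_assoc', eq_div_iff hA, mul_comm,
        card_mul_sum_trans]
  simp only [tG_eq_sum_copyIndicator, copyIndicator_comap, ← sum_div]
  rw [sum_comm, sum_congr rfl fun ψ _ => hrestrict ψ, sum_const, card_univ, nsmul_eq_mul,
    mul_div_cancel_left₀ _ hC, tG_eq_sum_copyIndicator]

lemma abs_tG_sub_tG_le_of_eq_off_vertex (F : Edge m r → Fin k) {G G' : Edge s r → Fin k} {i : Fin s}
    (hG : ∀ e : Edge s r, i ∉ e.1 → G e = G' e) : |tG F G - tG F G'| ≤ m / s := by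
  set C : ℝ := (Fintype.card (Fin m ↪ Fin s) : ℝ)
  have hpoint : ∀ ψ, |copyIndicator F G ψ - copyIndicator F G' ψ| ≤
      ∑ p, (if ψ p = i then 1 else 0 : ℝ) := fun ψ => by
    by_cases hhit : ∃ p, ψ p = i
    · obtain ⟨p, hp⟩ := hhit
      calc |copyIndicator F G ψ - copyIndicator F G' ψ| ≤ 1 := by
            unfold copyIndicator; split_ifs <;> norm_num
        _ = if ψ p = i then 1 else 0 := by rw [if_pos hp]
        _ ≤ ∑ p, (if ψ p = i then 1 else 0 : ℝ) :=
            single_le_sum (f := fun p => if ψ p = i then (1 : ℝ) else 0)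
              (fun _ _ => by positivity) (mem_univ p)
    · push Not at hhit
      have hmiss : ∀ e : Edge m r, i ∉ (mapEdge ψ e).1 := fun e he => by
        obtain ⟨p, -, hp⟩ := mem_map.mp he
        exact hhit p hp
      simp [copyIndicator, hG _ (hmiss _)]
  have hcount : ∑ ψ : Fin m ↪ Fin s, ∑ p, (if ψ p = i then 1 else 0 : ℝ) = m / s * C := by
    have hs : (s : ℝ) ≠ 0 := Nat.cast_ne_zero.mpr i.pos.ne'
    have hinner : ∀ p : Fin m, ∑ ψ : Fin m ↪ Fin s, (if ψ p = i then 1 else 0 : ℝ) = C / s :=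
      fun p => by
        rw [eq_div_iff hs, mul_comm]
        simpa only [Fintype.card_fin] using card_mul_sum_ite_apply_eq p i
    rw [sum_comm, sum_congr rfl fun p _ => hinner p, sum_const, card_univ, Fintype.card_fin,
      nsmul_eq_mul]
    ring
  rw [tG_eq_sum_copyIndicator, tG_eq_sum_copyIndicator, div_sub_div_same, ← sum_sub_distrib,
    abs_div, Nat.abs_cast]
  refine div_le_of_le_mul₀ (Nat.cast_nonneg _) (by positivity) ?_
  calc |∑ ψ, (copyIndicator F G ψ - copyIndicator F G' ψ)|
      ≤ ∑ ψ, |copyIndicator F G ψ - copyIndicator F G' ψ| := abs_sum_le_sum_abs _ _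
    _ ≤ ∑ ψ : Fin m ↪ Fin s, ∑ p, (if ψ p = i then 1 else 0 : ℝ) := sum_le_sum fun ψ _ => hpoint ψ
    _ = m / s * C := hcount

lemma abs_tG_comap_sub_tG_comap_swap_le (F : Edge m r → Fin k) (H : Edge M r → Fin k)
    (φ : Fin s ↪ Fin M) (i : Fin s) (y : Fin M) :
    |tG F (comap φ H) - tG F (comap (Equiv.swap (φ i) y • φ) H)| ≤ m / s := by
  by_cases hy : ∃ j, φ j = y
  · obtain ⟨j, rfl⟩ := hy
    have hrelabel : Equiv.swap (φ i) (φ j) • φ = (Equiv.swap i j).toEmbedding.trans φ := by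
      ext l; simp [Function.Embedding.smul_apply, φ.injective.swap_apply]
    rw [hrelabel, comap_trans, tG_comap_perm, sub_self, abs_zero]
    positivity
  · push Not at hy
    refine abs_tG_sub_tG_le_of_eq_off_vertex F (i := i) fun e he => congrArg H (Subtype.ext ?_)
    simp only [mapEdge, map_eq_image]
    refine image_congr fun l hl => ?_
    have hli : l ≠ i := fun h => he (h ▸ hl)
    simp [Function.Embedding.smul_apply, Equiv.swap_apply_of_ne_of_ne (φ.injective.ne hli) (hy l)]

end Density

section Exposure

variable {s M : ℕ}

def prefixKey (i : ℕ) (φ : Fin s ↪ Fin M) : Fin s → Option (Fin M) :=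
  fun j => if (j : ℕ) < i then some (φ j) else none

lemma prefixKey_eq_iff {i : ℕ} {φ ψ : Fin s ↪ Fin M} :
    prefixKey i φ = prefixKey i ψ ↔ ∀ j : Fin s, (j : ℕ) < i → φ j = ψ j := by
  simp only [prefixKey, funext_iff]
  refine forall_congr' fun j => ?_
  by_cases hj : (j : ℕ) < i <;> simp [hj]

lemma prefixKey_zero (φ ψ : Fin s ↪ Fin M) : prefixKey 0 φ = prefixKey 0 ψ :=
  prefixKey_eq_iff.mpr fun _ hj => absurd hj (Nat.not_lt_zero _)

lemma prefixKey_eq_of_succ (i : ℕ) (φ ψ : Fin s ↪ Fin M)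
    (h : prefixKey (i + 1) φ = prefixKey (i + 1) ψ) : prefixKey i φ = prefixKey i ψ :=
  prefixKey_eq_iff.mpr fun j hj => prefixKey_eq_iff.mp h j (Nat.lt_succ_of_lt hj)

lemma eq_of_prefixKey_eq (φ ψ : Fin s ↪ Fin M) (h : prefixKey s φ = prefixKey s ψ) : φ = ψ :=
  Function.Embedding.ext fun j => prefixKey_eq_iff.mp h j j.isLt

lemma prefixKey_swap_smul {i : Fin s} {a b w : Fin s ↪ Fin M} (hab : prefixKey i a = prefixKey i b)
    (hw : prefixKey (i + 1) w = prefixKey (i + 1) a) :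
    prefixKey (i + 1) (Equiv.swap (a i) (b i) • w) = prefixKey (i + 1) b := by
  rw [prefixKey_eq_iff] at *
  intro j hj
  rw [Function.Embedding.smul_apply, Equiv.Perm.smul_def, hw j hj]
  rcases Nat.lt_succ_iff_lt_or_eq.mp hj with hji | hji
  · have hne : j ≠ i := Fin.ne_of_lt hji
    rw [Equiv.swap_apply_of_ne_of_ne (a.injective.ne hne) (hab j hji ▸ b.injective.ne hne),
      hab j hji]
  · rw [Fin.ext hji, Equiv.swap_apply_left]

lemma abs_condAvg_prefixKey_sub_le {f : (Fin s ↪ Fin M) → ℝ} {c : ℝ}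
    (hf : ∀ φ i y, |f φ - f (Equiv.swap (φ i) y • φ)| ≤ c) (i : Fin s) {a b : Fin s ↪ Fin M}
    (hab : prefixKey i a = prefixKey i b) :
    |condAvg (prefixKey (i + 1)) f a - condAvg (prefixKey (i + 1)) f b| ≤ c := by
  refine abs_condAvg_sub_condAvg_le_of_equiv (MulAction.toPerm (Equiv.swap (a i) (b i)))
    (fun w => ⟨prefixKey_swap_smul hab, fun h => ?_⟩) fun w hw => ?_
  · have := prefixKey_swap_smul hab.symm h
    rwa [Equiv.swap_comm, MulAction.toPerm_apply, smul_smul, Equiv.swap_mul_self, one_smul] at this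
  · have hwi : w i = a i := prefixKey_eq_iff.mp hw i (Nat.lt_succ_self _)
    simpa [hwi] using hf w i (b i)

end Exposure

theorem density_concentration_general (r k m s M : ℕ) (hms : m ≤ s)
    (F : Edge m r → Fin k) (H : Edge M r → Fin k) (δ : ℝ) (hδ : 0 < δ) :
    (∑ φ : Fin s ↪ Fin M,
        if δ ≤ |tG F (fun e => H (mapEdge φ e)) - tG F H| then (1 : ℝ) else 0)
      / (Fintype.card (Fin s ↪ Fin M) : ℝ)
      ≤ 2 * Real.exp (-(δ^2 * s) / (2 * (m : ℝ)^2)) := by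
  set f : (Fin s ↪ Fin M) → ℝ := fun φ => tG F (comap φ H)
  have hincrement : ∀ i < s, ∀ φ,
      |condAvg (prefixKey (i + 1)) f φ - condAvg (prefixKey i) f φ| ≤ m / s :=
    fun i hi => abs_condAvg_sub_condAvg_le (prefixKey_eq_of_succ i) fun a b hab =>
      abs_condAvg_prefixKey_sub_le (abs_tG_comap_sub_tG_comap_swap_le F H) ⟨i, hi⟩ hab
  have hbound := sum_ite_le_abs_sub_le_mul_exp prefixKey_zero prefixKey_eq_of_succ
    (fun a b h => congrArg f (eq_of_prefixKey_eq a b h)) (sum_tG_comap hms F H) (by positivity)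
    hincrement hδ.le
  have hexponent : -δ ^ 2 / (2 * s * ((m : ℝ) / s) ^ 2) = -(δ ^ 2 * s) / (2 * (m : ℝ) ^ 2) := by
    rcases Nat.eq_zero_or_pos m with rfl | hm
    · simp
    · have hs : (s : ℝ) ≠ 0 := Nat.cast_ne_zero.mpr (by omega)
      field_simp
  rw [hexponent] at hbound
  exact div_le_of_le_mul₀ (Nat.cast_nonneg _) (by positivity) (hbound.trans_eq (mul_comm _ _))

/-- **subgraph-density concentration for random induced subgraphs.** Let `F`
be a `k`-colored `r`-graph on `m` vertices and `H` a `k`-colored `r`-graph on `M ≥ s`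
vertices. For the random induced subgraph `G(s,H)` on a uniform random `s`-subset (`s ≥ m`),
`P(|t(F,G(s,H)) − t(F,H)| ≥ δ) ≤ 2·exp(−δ²s/(2m²))`. -/
theorem density_concentration (r k m s M : ℕ) (hms : m ≤ s) (hsM : s ≤ M)
    (F : Edge m r → Fin k) (H : Edge M r → Fin k) (δ : ℝ) (hδ : 0 < δ) :
    (∑ φ : Fin s ↪ Fin M,
        if δ ≤ |tG F (fun e => H (mapEdge φ e)) - tG F H| then (1 : ℝ) else 0)
      / (Fintype.card (Fin s ↪ Fin M) : ℝ)
      ≤ 2 * Real.exp (-(δ^2 * s) / (2 * (m : ℝ)^2)) :=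
  density_concentration_general r k m s M hms F H δ hδ

end NDT16
end
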